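/- arXiv:1704.03547 — 9 statements merged into one kernel-verified Lean document; each statement's English description precedes it below -/
import Mathlib

section
/- Let b1 be a binary additive valuation on [m] identified with the set A = {i ∈ [m] : b1({i}) = 1}, and let v2 be a binary XOS valuation on [m]. Then the allocation that awards A to the first player and [m] ∖ A to the second achieves the optimal welfare, i.e. b1(A) + v2([m] ∖ A) = SW*(b1, v2) = max_{S ⊆ [m]} (b1(S) + v2([m] ∖ S)). -/
open Finset

/-- Value of a binary additive valuation (identified with the set `A`) on a bundle `S`. -/
def bval {m : ℕ} (A S : Finset (Fin m)) : ℕ := (A ∩ S).card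

/-- Value of a binary XOS valuation with clause set `V` on a bundle `S`. -/
def xval {m : ℕ} (V : Finset (Finset (Fin m))) (S : Finset (Fin m)) : ℕ :=
  V.sup fun C => (C ∩ S).card

/-- Optimal welfare between two (ℕ-valued) valuations on `[m]`. -/
def swB {m : ℕ} (v1 v2 : Finset (Fin m) → ℕ) : ℕ :=
  Finset.univ.sup fun S : Finset (Fin m) => v1 S + v2 Sᶜ

/-! Moving the bundle of the XOS player from `T` to `Aᶜ` loses at most the items of `A` in `T`,
which is exactly what the additive player gains by taking all of `A`. -/

theorem Finset.card_inter_le_card_inter_add_card_inter_compl {α : Type*} [Fintype α]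
    [DecidableEq α] (A C T : Finset α) :
    #(C ∩ T) ≤ #(A ∩ T) + #(C ∩ Aᶜ) := by
  calc #(C ∩ T) ≤ #((A ∩ T) ∪ (C ∩ Aᶜ)) := card_le_card fun x hx => by
          by_cases hA : x ∈ A <;> simp_all
    _ ≤ #(A ∩ T) + #(C ∩ Aᶜ) := card_union_le _ _

theorem bval_add_bval_compl {m : ℕ} (A S : Finset (Fin m)) :
    bval A S + bval A Sᶜ = bval A A := by
  simp only [bval, inter_self, ← sdiff_eq_inter_compl, card_inter_add_card_sdiff]

theorem xval_le_bval_add_xval_compl {m : ℕ} (A : Finset (Fin m))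
    (V : Finset (Finset (Fin m))) (T : Finset (Fin m)) :
    xval V T ≤ bval A T + xval V Aᶜ :=
  Finset.sup_le fun C hC =>
    (card_inter_le_card_inter_add_card_inter_compl A C T).trans <|
      Nat.add_le_add_left (le_sup (f := fun C => #(C ∩ Aᶜ)) hC) _

theorem stmt0_general {m : ℕ} (A : Finset (Fin m))
    (V : Finset (Finset (Fin m))) :
    bval A A + xval V Aᶜ = swB (bval A) (xval V) := by
  refine le_antisymm (le_sup (f := fun S => bval A S + xval V Sᶜ) (mem_univ A)) ?_
  refine Finset.sup_le fun S _ => ?_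
  calc bval A S + xval V Sᶜ ≤ bval A S + (bval A Sᶜ + xval V Aᶜ) :=
        Nat.add_le_add_left (xval_le_bval_add_xval_compl A V Sᶜ) _
    _ = bval A A + xval V Aᶜ := by rw [← add_assoc, bval_add_bval_compl]

/-- awarding `A` to the binary additive player and the rest to the
binary XOS player achieves the optimal welfare. -/
theorem stmt0 {m : ℕ} (A : Finset (Fin m))
    (V : Finset (Finset (Fin m))) (hV : V.Nonempty) :
    bval A A + xval V Aᶜ = swB (bval A) (xval V) :=
  stmt0_general A V
end

section
/- Let v1 and v2 be binary XOS valuations on [m]. Let b1 be a clause of v1 maximizing |b1| over all clauses of v1, and let (b2, b3) be a pair of clauses of v1 maximizing SW*(b2, b3) over all pairs of clauses of v1. Then (1/3) · (SW*(b1, v2) + SW*(b2, v2) + SW*(b3, v2)) ≥ (2/3) · SW*(v1, v2). (Consequently, the simultaneous randomized warmup protocol that makes Alice report one of b1, b2, b3 uniformly at random and allocates accordingly is a 2/3-approximation to the 2-party BXOS allocation problem.) -/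
/-!
Fix a bundle `S` optimal for `(v₁, v₂)` and a clause `c` of `v₁` attaining `v₁(S)`; write
`w = v₂(Sᶜ)`. Giving `S` to `b₁` yields `SW*(b₁, v₂) ≥ |b₁ ∩ S| + w`. Splitting the items as in an
optimal allocation for `(b₂, b₃)` and using subadditivity and monotonicity of `v₂` yields
`SW*(b₂, v₂) + SW*(b₃, v₂) ≥ SW*(b₂, b₃) + w`, and maximality of `(b₂, b₃)` yields
`SW*(b₂, b₃) ≥ SW*(c, b₁) ≥ |c ∩ S| + |b₁ ∩ Sᶜ|`. Adding up, the three welfares are at least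
`|b₁| + |c ∩ S| + 2w ≥ 2 (|c ∩ S| + w)`, because `b₁` is a largest clause.
-/

open Finset

section Welfare

variable {m : ℕ} (v₁ v₂ : Finset (Fin m) → ℕ)

lemma le_swB (S : Finset (Fin m)) : v₁ S + v₂ Sᶜ ≤ swB v₁ v₂ :=
  le_sup (f := fun S => v₁ S + v₂ Sᶜ) (mem_univ S)

lemma exists_swB_eq : ∃ S, swB v₁ v₂ = v₁ S + v₂ Sᶜ := by
  obtain ⟨S, -, hS⟩ := exists_mem_eq_sup univ univ_nonempty fun S => v₁ S + v₂ Sᶜ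
  exact ⟨S, hS⟩

lemma swB_add_swB_le (u₁ u₂ v : Finset (Fin m) → ℕ) (hv : ∀ X, v univ ≤ v X + v Xᶜ) :
    swB u₁ u₂ + v univ ≤ swB u₁ v + swB u₂ v := by
  obtain ⟨X, hX⟩ := exists_swB_eq u₁ u₂
  have h₁ := le_swB u₁ v X
  have h₂ := le_swB u₂ v Xᶜ
  rw [compl_compl] at h₂
  have := hv X
  omega

end Welfare

section XOS

variable {m : ℕ} (V : Finset (Finset (Fin m)))

lemma card_inter_le_xval {C : Finset (Fin m)} (hC : C ∈ V) (S : Finset (Fin m)) :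
    (C ∩ S).card ≤ xval V S :=
  le_sup (f := fun C => (C ∩ S).card) hC

lemma exists_xval_eq (hV : V.Nonempty) (S : Finset (Fin m)) :
    ∃ C ∈ V, xval V S = (C ∩ S).card :=
  exists_mem_eq_sup V hV fun C => (C ∩ S).card

lemma xval_mono {S T : Finset (Fin m)} (h : S ⊆ T) : xval V S ≤ xval V T :=
  sup_mono_fun fun _ _ => card_le_card (inter_subset_inter_left h)

lemma xval_union_le (S T : Finset (Fin m)) : xval V (S ∪ T) ≤ xval V S + xval V T :=
  Finset.sup_le fun C hC => by
    rw [inter_union_distrib_left]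
    exact (card_union_le _ _).trans
      (add_le_add (card_inter_le_xval V hC S) (card_inter_le_xval V hC T))

lemma xval_univ_le_add_compl (X : Finset (Fin m)) : xval V univ ≤ xval V X + xval V Xᶜ := by
  simpa only [union_compl] using xval_union_le V X Xᶜ

end XOS

lemma card_inter_add_card_inter_compl {m : ℕ} (A S : Finset (Fin m)) :
    (A ∩ S).card + (A ∩ Sᶜ).card = A.card := by
  rw [← sdiff_eq_inter_compl, card_inter_add_card_sdiff]

theorem stmt1_general {m : ℕ} (V1 V2 : Finset (Finset (Fin m)))
    (b1 b2 b3 : Finset (Fin m))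
    (hb1 : b1 ∈ V1)
    (hmax1 : ∀ c ∈ V1, c.card ≤ b1.card)
    (hmax23 : ∀ c ∈ V1, ∀ d ∈ V1, swB (bval c) (bval d) ≤ swB (bval b2) (bval b3)) :
    (1 / 3 : ℝ) * ((swB (bval b1) (xval V2) : ℝ) + (swB (bval b2) (xval V2) : ℝ)
        + (swB (bval b3) (xval V2) : ℝ))
      ≥ (2 / 3 : ℝ) * (swB (xval V1) (xval V2) : ℝ) := by
  suffices h : 2 * swB (xval V1) (xval V2) ≤
      swB (bval b1) (xval V2) + swB (bval b2) (xval V2) + swB (bval b3) (xval V2) by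
    have := (Nat.cast_le (α := ℝ)).2 h
    push_cast at this
    linarith
  obtain ⟨S, hS⟩ := exists_swB_eq (xval V1) (xval V2)
  obtain ⟨c, hc, hcS⟩ := exists_xval_eq V1 ⟨b1, hb1⟩ S
  have hb1S : (b1 ∩ S).card + xval V2 Sᶜ ≤ swB (bval b1) (xval V2) :=
    le_swB (bval b1) (xval V2) S
  have hcb1 : (c ∩ S).card + (b1 ∩ Sᶜ).card ≤ swB (bval b2) (bval b3) :=
    (le_swB (bval c) (bval b1) S).trans (hmax23 c hc b1 hb1)
  have hb23 := swB_add_swB_le (bval b2) (bval b3) (xval V2) (xval_univ_le_add_compl V2)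
  have hmono := xval_mono V2 (subset_univ Sᶜ)
  have hcb1_card : (c ∩ S).card ≤ b1.card := (card_le_card inter_subset_left).trans (hmax1 c hc)
  have hb1_split := card_inter_add_card_inter_compl b1 S
  omega

/-- if `b1` is a largest clause of `v1` and `(b2, b3)` is a pair of clauses of
`v1` maximizing `SW*(b2, b3)`, then the average of `SW*(b_j, v2)` over `j = 1, 2, 3` is at
least `(2/3) · SW*(v1, v2)`. -/
theorem stmt1 {m : ℕ} (V1 V2 : Finset (Finset (Fin m)))
    (hV1 : V1.Nonempty) (hV2 : V2.Nonempty)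
    (b1 b2 b3 : Finset (Fin m))
    (hb1 : b1 ∈ V1) (hb2 : b2 ∈ V1) (hb3 : b3 ∈ V1)
    (hmax1 : ∀ c ∈ V1, c.card ≤ b1.card)
    (hmax23 : ∀ c ∈ V1, ∀ d ∈ V1, swB (bval c) (bval d) ≤ swB (bval b2) (bval b3)) :
    (1 / 3 : ℝ) * ((swB (bval b1) (xval V2) : ℝ) + (swB (bval b2) (xval V2) : ℝ)
        + (swB (bval b3) (xval V2) : ℝ))
      ≥ (2 / 3 : ℝ) * (swB (xval V1) (xval V2) : ℝ) :=
  stmt1_general V1 V2 b1 b2 b3 hb1 hmax1 hmax23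
end

section
/- Let v1 and v2 be XOS valuations on [m]. Let b1 be a clause of v1 maximizing b1([m]) over clauses of v1, let (b2, b3) be a pair of clauses of v1 maximizing SW*(b2, b3), let b4 be a clause of v2 maximizing b4([m]) over clauses of v2, and let (b5, b6) be a pair of clauses of v2 maximizing SW*(b5, b6). Then max over j ∈ {1,2,3} and j' ∈ {4,5,6} of SW*(b_j, b_{j'}) is at least (3/5) · SW*(v1, v2). -/
open Finset

/-- Value of an additive valuation `a : Fin m → ℝ` on a bundle `S`. -/
noncomputable def aval {m : ℕ} (a : Fin m → ℝ) (S : Finset (Fin m)) : ℝ := ∑ i ∈ S, a i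

/-- Value of an XOS valuation with (nonempty list of) additive clauses `C` on a bundle `S`. -/
noncomputable def xosVal {m t : ℕ} (C : Fin (t + 1) → Fin m → ℝ) (S : Finset (Fin m)) : ℝ :=
  Finset.univ.sup' Finset.univ_nonempty fun j => aval (C j) S

/-- Optimal welfare between two (ℝ-valued) valuations on `[m]`. -/
noncomputable def swR {m : ℕ} (v1 v2 : Finset (Fin m) → ℝ) : ℝ :=
  Finset.univ.sup' Finset.univ_nonempty fun S : Finset (Fin m) => v1 S + v2 Sᶜ

/-!
Let `S` be an optimal split for `SW*(v1, v2)`, realised by clauses `a` of `v1` and `b` of `v2`,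
and let `M` be the left-hand side. Since `SW*(p, q) + d([m]) ≤ SW*(p, d) + SW*(d, q)` for every
additive `d`, the candidates `(b2, b4), (b3, b4)` give `2M ≥ SW*(b2, b3) + b4([m])`, and
`(b1, b5), (b1, b6)` give `2M ≥ SW*(b5, b6) + b1([m])`. Bounding `SW*(b2, b3)` below by the split
`S` of `(a, b1)`, `SW*(b5, b6)` by the split `S` of `(b4, b)`, and adding
`M ≥ b1(S) + b4([m] ∖ S)`, we get `5M ≥ a(S) + b([m] ∖ S) + 2 b1([m]) + 2 b4([m])`, which is at
least `3 (a(S) + b([m] ∖ S))` because `b1` and `b4` have maximal total value.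
-/

section Welfare

variable {m : ℕ}

lemma le_swR (v1 v2 : Finset (Fin m) → ℝ) (S : Finset (Fin m)) : v1 S + v2 Sᶜ ≤ swR v1 v2 :=
  le_sup' (fun S : Finset (Fin m) => v1 S + v2 Sᶜ) (mem_univ S)

lemma exists_swR_eq (v1 v2 : Finset (Fin m) → ℝ) : ∃ S, swR v1 v2 = v1 S + v2 Sᶜ := by
  obtain ⟨S, -, hS⟩ := exists_mem_eq_sup' univ_nonempty fun S : Finset (Fin m) => v1 S + v2 Sᶜ
  exact ⟨S, hS⟩

lemma swR_comm (v1 v2 : Finset (Fin m) → ℝ) : swR v1 v2 = swR v2 v1 := by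
  refine le_antisymm ?_ ?_ <;>
  · obtain ⟨S, hS⟩ := exists_swR_eq _ _
    rw [hS, add_comm]
    simpa only [compl_compl] using le_swR _ _ Sᶜ

lemma aval_add_aval_compl (a : Fin m → ℝ) (S : Finset (Fin m)) :
    aval a S + aval a Sᶜ = aval a univ :=
  sum_add_sum_compl S a

lemma aval_le_aval_univ {a : Fin m → ℝ} (ha : ∀ i, 0 ≤ a i) (S : Finset (Fin m)) :
    aval a S ≤ aval a univ :=
  sum_le_sum_of_subset_of_nonneg (subset_univ S) fun i _ _ => ha i

/-- Split the items optimally for `(v1, v2)`: the additive `d` can take either side's place,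
and its two resulting bundles partition `[m]`. -/
lemma swR_add_aval_univ_le (v1 v2 : Finset (Fin m) → ℝ) (d : Fin m → ℝ) :
    swR v1 v2 + aval d univ ≤ swR v1 (aval d) + swR (aval d) v2 := by
  obtain ⟨T, hT⟩ := exists_swR_eq v1 v2
  have h1 := le_swR v1 (aval d) T
  have h2 := le_swR (aval d) v2 T
  linarith [aval_add_aval_compl d T]

lemma exists_swR_xosVal_eq {t1 t2 : ℕ} (C1 : Fin (t1 + 1) → Fin m → ℝ)
    (C2 : Fin (t2 + 1) → Fin m → ℝ) :
    ∃ S j j', swR (xosVal C1) (xosVal C2) = aval (C1 j) S + aval (C2 j') Sᶜ := by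
  obtain ⟨S, hS⟩ := exists_swR_eq (xosVal C1) (xosVal C2)
  obtain ⟨j, -, hj⟩ := exists_mem_eq_sup' univ_nonempty fun j => aval (C1 j) S
  obtain ⟨j', -, hj'⟩ := exists_mem_eq_sup' univ_nonempty fun j => aval (C2 j) Sᶜ
  exact ⟨S, j, j', by rw [hS, xosVal, xosVal, hj, hj']⟩

end Welfare

/-- for XOS valuations `v1, v2`, if `b1` is a clause of `v1` maximizing
`b1([m])`, `(b2, b3)` a pair of clauses of `v1` maximizing `SW*(b2, b3)`, `b4` a clause of
`v2` maximizing `b4([m])`, and `(b5, b6)` a pair of clauses of `v2` maximizing `SW*(b5, b6)`,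
then `max_{j ∈ {1,2,3}, j' ∈ {4,5,6}} SW*(b_j, b_{j'}) ≥ (3/5) · SW*(v1, v2)`. -/
theorem stmt2 {m t1 t2 : ℕ}
    (C1 : Fin (t1 + 1) → Fin m → ℝ) (C2 : Fin (t2 + 1) → Fin m → ℝ)
    (hC1 : ∀ j i, 0 ≤ C1 j i) (hC2 : ∀ j i, 0 ≤ C2 j i)
    (j1 j2 j3 : Fin (t1 + 1)) (j4 j5 j6 : Fin (t2 + 1))
    (hj1 : ∀ j, aval (C1 j) Finset.univ ≤ aval (C1 j1) Finset.univ)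
    (hj23 : ∀ j j', swR (aval (C1 j)) (aval (C1 j'))
      ≤ swR (aval (C1 j2)) (aval (C1 j3)))
    (hj4 : ∀ j, aval (C2 j) Finset.univ ≤ aval (C2 j4) Finset.univ)
    (hj56 : ∀ j j', swR (aval (C2 j)) (aval (C2 j'))
      ≤ swR (aval (C2 j5)) (aval (C2 j6))) :
    Finset.univ.sup' Finset.univ_nonempty
        (fun p : Fin 3 × Fin 3 =>
          swR (aval (![C1 j1, C1 j2, C1 j3] p.1)) (aval (![C2 j4, C2 j5, C2 j6] p.2)))
      ≥ (3 / 5 : ℝ) * swR (xosVal C1) (xosVal C2) := by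
  set M := Finset.univ.sup' Finset.univ_nonempty
    (fun p : Fin 3 × Fin 3 =>
      swR (aval (![C1 j1, C1 j2, C1 j3] p.1)) (aval (![C2 j4, C2 j5, C2 j6] p.2)))
  have hM (i i' : Fin 3) :
      swR (aval (![C1 j1, C1 j2, C1 j3] i)) (aval (![C2 j4, C2 j5, C2 j6] i')) ≤ M :=
    le_sup' (fun p : Fin 3 × Fin 3 =>
      swR (aval (![C1 j1, C1 j2, C1 j3] p.1)) (aval (![C2 j4, C2 j5, C2 j6] p.2)))
      (mem_univ (i, i'))
  have hW1 : swR (aval (C1 j2)) (aval (C1 j3)) + aval (C2 j4) univ ≤ 2 * M := by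
    have h24 : swR (aval (C1 j2)) (aval (C2 j4)) ≤ M := hM 1 0
    have h34 : swR (aval (C1 j3)) (aval (C2 j4)) ≤ M := hM 2 0
    have := swR_add_aval_univ_le (aval (C1 j2)) (aval (C1 j3)) (C2 j4)
    rw [swR_comm (aval (C2 j4)) (aval (C1 j3))] at this
    linarith
  have hW2 : swR (aval (C2 j5)) (aval (C2 j6)) + aval (C1 j1) univ ≤ 2 * M := by
    have h15 : swR (aval (C1 j1)) (aval (C2 j5)) ≤ M := hM 0 1
    have h16 : swR (aval (C1 j1)) (aval (C2 j6)) ≤ M := hM 0 2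
    have := swR_add_aval_univ_le (aval (C2 j5)) (aval (C2 j6)) (C1 j1)
    rw [swR_comm (aval (C2 j5)) (aval (C1 j1))] at this
    linarith
  obtain ⟨S, ja, jb, hOPT⟩ := exists_swR_xosVal_eq C1 C2
  have hx := (le_swR (aval (C1 ja)) (aval (C1 j1)) S).trans (hj23 ja j1)
  have hy := (le_swR (aval (C2 j4)) (aval (C2 jb)) S).trans (hj56 j4 jb)
  have h14 : aval (C1 j1) S + aval (C2 j4) Sᶜ ≤ M := (le_swR _ _ S).trans (hM 0 0)
  have ha := (aval_le_aval_univ (hC1 ja) S).trans (hj1 ja)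
  have hb := (aval_le_aval_univ (hC2 jb) Sᶜ).trans (hj4 jb)
  linarith [aval_add_aval_compl (C1 j1) S, aval_add_aval_compl (C2 j4) S]
end

section
/- Let v be a binary XOS valuation on [m], let 0 < α ≤ 1/2, let k be a positive integer, and let (b_1,…,b_k) be a (k,α)-sketch of v. Let a be a clause of v and let A ⊆ {i ∈ [m] : i ∈ a}. Then, writing x_i = (1/k) ∑_{j=1}^k 1[i ∈ b_j], we have ∑_{i=1}^m (x_i − 2α x_i²) + 2α ∑_{i∈A} x_i ≥ |A| − 2α·v([m])/k. -/
open Finset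

/-- `x_i`: the fraction of the `k` sketch clauses `b` containing item `i`. -/
noncomputable def sketchX {m k : ℕ} (b : Fin k → Finset (Fin m)) (i : Fin m) : ℝ :=
  (∑ j, if i ∈ b j then (1 : ℝ) else 0) / k

/-- The objective `∑ i (x_i − α x_i²)` that a `(k,α)`-sketch maximizes. -/
noncomputable def sketchObj {m k : ℕ} (α : ℝ) (b : Fin k → Finset (Fin m)) : ℝ :=
  ∑ i, (sketchX b i - α * (sketchX b i) ^ 2)

/-- `(b_1,…,b_k)` is a `(k,α)`-sketch of the binary XOS valuation with clause set `V`: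
each `b_j` is a clause, and the tuple maximizes `∑ i (x_i − α x_i²)` over all k-tuples of
clauses (repetitions allowed). -/
def IsSketch {m k : ℕ} (α : ℝ) (V : Finset (Finset (Fin m)))
    (b : Fin k → Finset (Fin m)) : Prop :=
  (∀ j, b j ∈ V) ∧
    ∀ c : Fin k → Finset (Fin m), (∀ j, c j ∈ V) → sketchObj α c ≤ sketchObj α b

/-!
Replacing the `j`-th sketch clause `b_j` by the clause `a` moves `x` by
`d_j = (1_a − 1_{b_j}) / k`, and since the objective is quadratic, optimality of the sketch gives
`⟪d_j, 1 − 2αx⟫ ≤ α ‖d_j‖² ≤ 2α v([m]) / k²`. Summing over `j`, where `∑_j d_j = 1_a − x`, yields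
`⟪1_a − x, 1 − 2αx⟫ ≤ 2α v([m]) / k`. Since `α ≤ 1/2` and `0 ≤ x ≤ 1`, the weights `1 − 2αx_i` are
nonnegative, so `⟪1_a, 1 − 2αx⟫ ≥ ∑_{i ∈ A} (1 − 2αx_i)`, which rearranges to the claim.
-/

noncomputable def ind {ι : Type*} [DecidableEq ι] (S : Finset ι) (i : ι) : ℝ :=
  if i ∈ S then 1 else 0

section Indicator

variable {ι : Type*} [DecidableEq ι]

lemma ind_nonneg (S : Finset ι) (i : ι) : 0 ≤ ind S i := by
  unfold ind; split_ifs <;> norm_num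

lemma ind_le_one (S : Finset ι) (i : ι) : ind S i ≤ 1 := by
  unfold ind; split_ifs <;> norm_num

lemma sq_ind_sub_ind_le (S T : Finset ι) (i : ι) : (ind S i - ind T i) ^ 2 ≤ ind S i + ind T i := by
  unfold ind; split_ifs <;> norm_num

variable [Fintype ι]

lemma sum_ind (S : Finset ι) : ∑ i, ind S i = S.card := by
  simp [ind]

lemma sum_sq_ind_sub_ind_le (S T : Finset ι) :
    ∑ i, (ind S i - ind T i) ^ 2 ≤ S.card + T.card := by
  rw [← sum_ind S, ← sum_ind T, ← sum_add_distrib]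
  exact sum_le_sum fun i _ => sq_ind_sub_ind_le S T i

lemma sum_le_sum_ind_mul {A S : Finset ι} (hA : A ⊆ S) {f : ι → ℝ} (hf : ∀ i, 0 ≤ f i) :
    ∑ i ∈ A, f i ≤ ∑ i, ind S i * f i := by
  have hS : ∑ i, ind S i * f i = ∑ i ∈ S, f i := by
    simp only [ind, ite_mul, one_mul, zero_mul, sum_ite_mem, univ_inter]
  rw [hS]
  exact sum_le_sum_of_subset_of_nonneg hA fun i _ _ => hf i

end Indicator

lemma sum_mul_one_sub_le_of_sum_le {ι : Type*} [Fintype ι] {α : ℝ} {x d : ι → ℝ}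
    (h : ∑ i, (x i + d i - α * (x i + d i) ^ 2) ≤ ∑ i, (x i - α * x i ^ 2)) :
    ∑ i, d i * (1 - 2 * α * x i) ≤ α * ∑ i, d i ^ 2 := by
  have hdiff : ∑ i, (x i + d i - α * (x i + d i) ^ 2) - ∑ i, (x i - α * x i ^ 2)
      = ∑ i, d i * (1 - 2 * α * x i) - α * ∑ i, d i ^ 2 := by
    rw [mul_sum, ← sum_sub_distrib, ← sum_sub_distrib]
    exact sum_congr rfl fun i _ => by ring
  linarith

lemma card_le_xval {m : ℕ} {V : Finset (Finset (Fin m))} {C : Finset (Fin m)} (hC : C ∈ V) :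
    C.card ≤ xval V univ := by
  simpa [xval] using le_sup (f := fun C => (C ∩ univ).card) hC

section Sketch

variable {m k : ℕ}

lemma sketchX_eq (b : Fin k → Finset (Fin m)) (i : Fin m) :
    sketchX b i = (∑ j, ind (b j) i) / k := rfl

lemma sketchX_nonneg (b : Fin k → Finset (Fin m)) (i : Fin m) : 0 ≤ sketchX b i :=
  div_nonneg (sum_nonneg fun _ _ => ind_nonneg _ _) k.cast_nonneg

lemma sketchX_le_one (b : Fin k → Finset (Fin m)) (i : Fin m) : sketchX b i ≤ 1 := by
  refine div_le_one_of_le₀ ?_ k.cast_nonneg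
  calc ∑ j, ind (b j) i ≤ ∑ _j : Fin k, (1 : ℝ) := sum_le_sum fun j _ => ind_le_one (b j) i
    _ = k := by simp

lemma sketchX_update (b : Fin k → Finset (Fin m)) (j : Fin k) (a : Finset (Fin m)) (i : Fin m) :
    sketchX (Function.update b j a) i = sketchX b i + (ind a i - ind (b j) i) / k := by
  have hterm : ∀ j', ind (Function.update b j a j') i
      = ind (b j') i + if j' = j then ind a i - ind (b j) i else 0 := by
    intro j'
    rcases eq_or_ne j' j with rfl | h <;> simp [*]
  simp only [sketchX_eq, hterm, sum_add_distrib, sum_ite_eq', mem_univ, if_true, add_div]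

lemma sum_ind_sub_ind_div (hk : 0 < k) (b : Fin k → Finset (Fin m)) (a : Finset (Fin m))
    (i : Fin m) : ∑ j, (ind a i - ind (b j) i) / k = ind a i - sketchX b i := by
  rw [← sum_div, sum_sub_distrib, sum_const, card_univ, Fintype.card_fin, nsmul_eq_mul, sub_div,
    mul_div_cancel_left₀ _ (by positivity), sketchX_eq]

lemma one_sub_two_mul_sketchX_nonneg {α : ℝ} (hα0 : 0 ≤ α) (hα : α ≤ 1 / 2)
    (b : Fin k → Finset (Fin m)) (i : Fin m) : 0 ≤ 1 - 2 * α * sketchX b i := by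
  nlinarith [sketchX_nonneg b i, sketchX_le_one b i]

variable {α : ℝ} {V : Finset (Finset (Fin m))} {b : Fin k → Finset (Fin m)} {a : Finset (Fin m)}

lemma sum_sq_ind_sub_ind_div_le {S T : Finset (Fin m)} (hS : S ∈ V) (hT : T ∈ V) :
    ∑ i, ((ind S i - ind T i) / k) ^ 2 ≤ 2 * xval V univ / k ^ 2 := by
  simp_rw [div_pow, ← sum_div]
  gcongr
  calc ∑ i, (ind S i - ind T i) ^ 2 ≤ S.card + T.card := sum_sq_ind_sub_ind_le S T
    _ ≤ xval V univ + xval V univ := by gcongr <;> exact_mod_cast card_le_xval ‹_›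
    _ = 2 * xval V univ := by ring

lemma IsSketch.sum_mul_le (hb : IsSketch α V b) (ha : a ∈ V) (j : Fin k) :
    ∑ i, (ind a i - ind (b j) i) / k * (1 - 2 * α * sketchX b i)
      ≤ α * ∑ i, ((ind a i - ind (b j) i) / k) ^ 2 := by
  apply sum_mul_one_sub_le_of_sum_le
  have hc : ∀ j', Function.update b j a j' ∈ V := by
    intro j'
    rcases eq_or_ne j' j with rfl | h <;> simp [*, hb.1 j']
  simpa only [sketchObj, sketchX_update] using hb.2 _ hc

lemma IsSketch.sum_ind_sub_mul_le (hk : 0 < k) (hα : 0 ≤ α) (hb : IsSketch α V b) (ha : a ∈ V) :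
    ∑ i, (ind a i - sketchX b i) * (1 - 2 * α * sketchX b i) ≤ 2 * α * xval V univ / k := by
  calc ∑ i, (ind a i - sketchX b i) * (1 - 2 * α * sketchX b i)
      = ∑ j, ∑ i, (ind a i - ind (b j) i) / k * (1 - 2 * α * sketchX b i) := by
        rw [sum_comm]
        simp_rw [← sum_mul, sum_ind_sub_ind_div hk]
    _ ≤ ∑ _j : Fin k, α * (2 * xval V univ / k ^ 2) := sum_le_sum fun j _ =>
        (hb.sum_mul_le ha j).trans (by gcongr; exact sum_sq_ind_sub_ind_div_le ha (hb.1 j))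
    _ = 2 * α * xval V univ / k := by
        rw [sum_const, card_univ, Fintype.card_fin, nsmul_eq_mul]
        field_simp

end Sketch

theorem stmt3_general {m k : ℕ} (hk : 0 < k) (α : ℝ) (hα0 : 0 < α) (hα : α ≤ 1 / 2)
    (V : Finset (Finset (Fin m)))
    (b : Fin k → Finset (Fin m)) (hb : IsSketch α V b)
    (a : Finset (Fin m)) (ha : a ∈ V) (A : Finset (Fin m)) (hA : A ⊆ a) :
    ∑ i, (sketchX b i - 2 * α * (sketchX b i) ^ 2) + 2 * α * ∑ i ∈ A, sketchX b i
      ≥ (A.card : ℝ) - 2 * α * (xval V Finset.univ : ℝ) / k := by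
  have hkey := hb.sum_ind_sub_mul_le hk hα0.le ha
  have hA_le := sum_le_sum_ind_mul hA (one_sub_two_mul_sketchX_nonneg hα0.le hα b)
  have hsplit : ∑ i, (ind a i - sketchX b i) * (1 - 2 * α * sketchX b i)
      = ∑ i, ind a i * (1 - 2 * α * sketchX b i)
          - ∑ i, (sketchX b i - 2 * α * sketchX b i ^ 2) := by
    rw [← sum_sub_distrib]
    exact sum_congr rfl fun i _ => by ring
  have hsum_A : ∑ i ∈ A, (1 - 2 * α * sketchX b i) = A.card - 2 * α * ∑ i ∈ A, sketchX b i := by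
    rw [sum_sub_distrib, ← mul_sum]
    simp
  linarith

/-- the sketch inequality for binary XOS valuations
(Lemma `lem:bsketch` of the paper). -/
theorem stmt3 {m k : ℕ} (hk : 0 < k) (α : ℝ) (hα0 : 0 < α) (hα : α ≤ 1 / 2)
    (V : Finset (Finset (Fin m))) (hV : V.Nonempty)
    (b : Fin k → Finset (Fin m)) (hb : IsSketch α V b)
    (a : Finset (Fin m)) (ha : a ∈ V) (A : Finset (Fin m)) (hA : A ⊆ a) :
    ∑ i, (sketchX b i - 2 * α * (sketchX b i) ^ 2) + 2 * α * ∑ i ∈ A, sketchX b i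
      ≥ (A.card : ℝ) - 2 * α * (xval V Finset.univ : ℝ) / k :=
  stmt3_general hk α hα0 hα V b hb a ha A hA
end

section
/- Let v be an XOS valuation on [m], let 0 < α ≤ 1/2, let k be a positive integer, and let (b_1,…,b_k) be a (k,α)-sketch of v. Let a be a clause of v and let a' be an additive valuation with a'(i) ≤ a(i) for all items i. Then, writing x_{i,u} = (1/k) ∑_{j=1}^k 1[b_j(i) ≥ u], we have ∑_{i=1}^m ( ∫_0^∞ (x_{i,u} − 2α x_{i,u}²) du + 2α ∫_0^{a'(i)} x_{i,u} du ) ≥ a'([m]) − 2α·v([m])/k. -/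
open Finset MeasureTheory

/-- `x_{i,u}`: the fraction of the `k` sketch clauses `b` whose value for item `i` is `≥ u`. -/
noncomputable def rX {m k : ℕ} (b : Fin k → Fin m → ℝ) (i : Fin m) (u : ℝ) : ℝ :=
  (∑ j, if u ≤ b j i then (1 : ℝ) else 0) / k

/-- The objective `∑ i ∫₀^∞ (x_{i,u} − α x_{i,u}²) du` that a `(k,α)`-sketch of an XOS
valuation maximizes. -/
noncomputable def rObj {m k : ℕ} (α : ℝ) (b : Fin k → Fin m → ℝ) : ℝ :=
  ∑ i, ∫ u in Set.Ioi (0 : ℝ), (rX b i u - α * (rX b i u) ^ 2)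

/-- `(C (σ 1),…,C (σ k))` is a `(k,α)`-sketch of the XOS valuation with clauses `C`:
it maximizes the objective over all k-tuples of clauses (repetitions allowed). -/
def IsSketchR {m t k : ℕ} (α : ℝ) (C : Fin (t + 1) → Fin m → ℝ)
    (σ : Fin k → Fin (t + 1)) : Prop :=
  ∀ τ : Fin k → Fin (t + 1), rObj α (fun j => C (τ j)) ≤ rObj α (fun j => C (σ j))

/-!
Replacing the `j₀`-th clause of the sketch `b` by the clause `a` moves `x_{i,u}` by
`(1[u ≤ a i] - 1[u ≤ b j₀ i]) / k`, and by optimality none of these `k` exchanges increases the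
objective. Summing the second-order expansions of `y ↦ y - α y²` over `j₀`, the linear terms add
up to `(1[u ≤ a i] - x) (1 - 2 α x)`, while each quadratic term is at most
`α / k² · (1[u ≤ a i] + 1[u ≤ b j₀ i])`; integrated and summed over items, the latter cost at most
`α / k · (a([m]) + (1/k) ∑ⱼ b j ([m])) ≤ 2 α v([m]) / k`. Finally `1 - 2 α x ≥ 0` because `α ≤ 1/2`, so shrinking
`∫₀^{a i}` to `∫₀^{a' i}` only lowers `∫ 1[u ≤ a i] (1 - 2 α x)`.
-/

noncomputable def step (c u : ℝ) : ℝ := if u ≤ c then 1 else 0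

def sketchIntegrand (α y : ℝ) : ℝ := y - α * y ^ 2

lemma step_eq_indicator (c : ℝ) : step c = (Set.Iic c).indicator 1 := by
  ext u
  simp [step, Set.indicator_apply]

lemma step_nonneg (c u : ℝ) : 0 ≤ step c u := by
  unfold step; split_ifs <;> norm_num

lemma step_le_one (c u : ℝ) : step c u ≤ 1 := by
  unfold step; split_ifs <;> norm_num

lemma sub_step_sq_le (c d u : ℝ) : (step c u - step d u) ^ 2 ≤ step c u + step d u := by
  unfold step; split_ifs <;> norm_num

lemma measurable_step (c : ℝ) : Measurable (step c) := by
  rw [step_eq_indicator]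
  exact measurable_one.indicator measurableSet_Iic

lemma integrableOn_step (c : ℝ) : IntegrableOn (step c) (Set.Ioi 0) := by
  rw [step_eq_indicator, IntegrableOn, integrable_indicator_iff measurableSet_Iic, IntegrableOn,
    Measure.restrict_restrict measurableSet_Iic, Set.Iic_inter_Ioi]
  exact integrableOn_const measure_Ioc_lt_top.ne

lemma setIntegral_step_mul (c : ℝ) (f : ℝ → ℝ) :
    ∫ u in Set.Ioi 0, step c u * f u = ∫ u in Set.Ioc 0 c, f u := by
  have h : Set.EqOn (fun u => step c u * f u) ((Set.Iic c).indicator f) (Set.Ioi 0) := by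
    intro u _
    by_cases hu : u ≤ c <;> simp [step, Set.indicator, hu]
  rw [setIntegral_congr_fun measurableSet_Ioi h, setIntegral_indicator measurableSet_Iic,
    Set.Ioi_inter_Iic]

lemma integral_step {c : ℝ} (hc : 0 ≤ c) : ∫ u in Set.Ioi 0, step c u = c := by
  simpa [Real.volume_real_Ioc, hc] using setIntegral_step_mul c 1

lemma sum_update_eq_add_sub {ι M : Type*} [Fintype ι] [DecidableEq ι] [AddCommGroup M]
    (g : ι → M) (j₀ : ι) (v : M) :
    ∑ j, Function.update g j₀ v j = ∑ j, g j + (v - g j₀) := by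
  rw [Finset.sum_update_of_mem (Finset.mem_univ j₀), Finset.sdiff_singleton_eq_erase,
    ← Finset.add_sum_erase _ g (Finset.mem_univ j₀)]
  abel

section Fraction

variable {m k : ℕ} (b : Fin k → Fin m → ℝ) (i : Fin m)

lemma rX_eq_sum_step (u : ℝ) : rX b i u = (∑ j, step (b j i) u) / k := rfl

lemma rX_nonneg (u : ℝ) : 0 ≤ rX b i u :=
  div_nonneg (Finset.sum_nonneg fun _ _ => step_nonneg _ _) k.cast_nonneg

lemma rX_le_one (u : ℝ) : rX b i u ≤ 1 := by
  refine div_le_one_of_le₀ ?_ k.cast_nonneg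
  calc ∑ j, step (b j i) u ≤ ∑ _j : Fin k, (1 : ℝ) := Finset.sum_le_sum fun _ _ => step_le_one _ _
    _ = k := by simp

lemma sum_step_eq_mul_rX (hk : 0 < k) (u : ℝ) : ∑ j, step (b j i) u = k * rX b i u := by
  rw [rX_eq_sum_step, mul_div_cancel₀ _ (by positivity)]

lemma measurable_rX : Measurable (rX b i) :=
  (Finset.measurable_sum _ fun _ _ => measurable_step _).div_const _

lemma integrableOn_rX : IntegrableOn (rX b i) (Set.Ioi 0) :=
  (integrable_finsetSum _ fun _ _ => integrableOn_step _).div_const _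

lemma integral_rX (hb : ∀ j, 0 ≤ b j i) : ∫ u in Set.Ioi 0, rX b i u = (∑ j, b j i) / k := by
  simp only [rX_eq_sum_step]
  rw [integral_div, integral_finsetSum _ fun _ _ => integrableOn_step _]
  simp only [integral_step (hb _)]

lemma norm_one_sub_mul_rX_le (β u : ℝ) : ‖1 - β * rX b i u‖ ≤ 1 + |β| := by
  have h0 := rX_nonneg b i u
  have h1 := rX_le_one b i u
  calc ‖1 - β * rX b i u‖ ≤ ‖(1 : ℝ)‖ + |β| * |rX b i u| := by
        rw [← abs_mul]; exact norm_sub_le _ _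
    _ ≤ 1 + |β| := by
        rw [abs_of_nonneg h0, norm_one]; nlinarith [abs_nonneg β]

lemma integrableOn_mul_one_sub_mul_rX {f : ℝ → ℝ} (hf : IntegrableOn f (Set.Ioi 0)) (β : ℝ) :
    IntegrableOn (fun u => f u * (1 - β * rX b i u)) (Set.Ioi 0) :=
  hf.mul_bdd (measurable_const.sub ((measurable_rX b i).const_mul β)).aestronglyMeasurable
    (Filter.Eventually.of_forall (norm_one_sub_mul_rX_le b i β))

lemma integrableOn_sketchIntegrand (β : ℝ) :
    IntegrableOn (fun u => sketchIntegrand β (rX b i u)) (Set.Ioi 0) := by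
  refine (integrableOn_mul_one_sub_mul_rX b i (integrableOn_rX b i) β).congr_fun
    (fun u _ => ?_) measurableSet_Ioi
  simp only [sketchIntegrand]; ring

lemma rX_update (j₀ : Fin k) (c : Fin m → ℝ) (u : ℝ) :
    rX (Function.update b j₀ c) i u = rX b i u + (step (c i) u - step (b j₀ i) u) / k := by
  simp only [rX_eq_sum_step, Function.apply_update (fun _ (a : Fin m → ℝ) => step (a i) u),
    sum_update_eq_add_sub, add_div]

end Fraction

lemma sum_sketchIntegrand_exchange_ge {k : ℕ} (hk : 0 < k) {α : ℝ} (hα : 0 ≤ α) {r x : ℝ}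
    {s : Fin k → ℝ} (hx : ∑ j, s j = k * x) (hrs : ∀ j, (r - s j) ^ 2 ≤ r + s j) :
    r * (1 - 2 * α * x) - sketchIntegrand (2 * α) x ≤
      ∑ j, (sketchIntegrand α (x + (r - s j) / k) - sketchIntegrand α x) + α / k * (r + x) := by
  have hk' : (0 : ℝ) < k := by exact_mod_cast hk
  have hgain : ∀ j, sketchIntegrand α (x + (r - s j) / k) - sketchIntegrand α x
      = (1 - 2 * α * x) * (r - s j) / k - α / k ^ 2 * (r - s j) ^ 2 := by
    intro j; unfold sketchIntegrand; field_simp; ring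
  have hlin : ∑ j, (1 - 2 * α * x) * (r - s j) / k = (r - x) * (1 - 2 * α * x) := by
    rw [← Finset.sum_div, ← Finset.mul_sum, Finset.sum_sub_distrib, hx]
    simp only [Finset.sum_const, Finset.card_univ, Fintype.card_fin, nsmul_eq_mul]
    field_simp
  have hsq : α / k ^ 2 * ∑ j, (r - s j) ^ 2 ≤ α / k * (r + x) :=
    calc α / k ^ 2 * ∑ j, (r - s j) ^ 2 ≤ α / k ^ 2 * ∑ j, (r + s j) :=
          mul_le_mul_of_nonneg_left (Finset.sum_le_sum fun j _ => hrs j) (by positivity)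
      _ = α / k * (r + x) := by
          rw [Finset.sum_add_distrib, hx]
          simp only [Finset.sum_const, Finset.card_univ, Fintype.card_fin, nsmul_eq_mul]
          field_simp
  rw [Finset.sum_congr rfl fun j _ => hgain j, Finset.sum_sub_distrib, hlin, ← Finset.mul_sum]
  unfold sketchIntegrand
  nlinarith

lemma exchange_gain_ge {m k : ℕ} (hk : 0 < k) {α : ℝ} (hα : 0 ≤ α) (b : Fin k → Fin m → ℝ)
    (c : Fin m → ℝ) (i : Fin m) (u : ℝ) :
    step (c i) u * (1 - 2 * α * rX b i u) - sketchIntegrand (2 * α) (rX b i u) ≤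
      ∑ j₀, (sketchIntegrand α (rX (Function.update b j₀ c) i u) - sketchIntegrand α (rX b i u))
        + α / k * (step (c i) u + rX b i u) := by
  simp only [rX_update]
  exact sum_sketchIntegrand_exchange_ge hk hα (sum_step_eq_mul_rX b i hk u)
    fun j => sub_step_sq_le _ _ u

lemma setIntegral_exchange_gain_ge {m k : ℕ} (hk : 0 < k) {α : ℝ} (hα : 0 ≤ α)
    (b : Fin k → Fin m → ℝ) (c : Fin m → ℝ) (i : Fin m) (hb : ∀ j, 0 ≤ b j i) (hc : 0 ≤ c i) :
    (∫ u in Set.Ioi 0, step (c i) u * (1 - 2 * α * rX b i u))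
        - ∫ u in Set.Ioi 0, sketchIntegrand (2 * α) (rX b i u)
      ≤ ∑ j₀, ((∫ u in Set.Ioi 0, sketchIntegrand α (rX (Function.update b j₀ c) i u))
          - ∫ u in Set.Ioi 0, sketchIntegrand α (rX b i u))
        + α / k * (c i + (∑ j, b j i) / k) := by
  have hstep := integrableOn_mul_one_sub_mul_rX b i (integrableOn_step (c i)) (2 * α)
  have hgain : ∀ j₀, IntegrableOn (fun u => sketchIntegrand α (rX (Function.update b j₀ c) i u)
      - sketchIntegrand α (rX b i u)) (Set.Ioi 0) := fun j₀ =>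
    (integrableOn_sketchIntegrand _ i α).sub (integrableOn_sketchIntegrand b i α)
  have hrest : IntegrableOn (fun u => α / k * (step (c i) u + rX b i u)) (Set.Ioi 0) :=
    ((integrableOn_step (c i)).add (integrableOn_rX b i)).const_mul _
  rw [← integral_sub hstep (integrableOn_sketchIntegrand b i _)]
  calc _ ≤ ∫ u in Set.Ioi 0, (∑ j₀, (sketchIntegrand α (rX (Function.update b j₀ c) i u)
            - sketchIntegrand α (rX b i u)) + α / k * (step (c i) u + rX b i u)) :=
        integral_mono (hstep.sub (integrableOn_sketchIntegrand b i _))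
          ((integrable_finsetSum _ fun j₀ _ => hgain j₀).add hrest)
          (exchange_gain_ge hk hα b c i)
    _ = _ := by
        rw [integral_add (integrable_finsetSum _ fun j₀ _ => hgain j₀) hrest,
          integral_finsetSum _ fun j₀ _ => hgain j₀, integral_const_mul,
          integral_add (integrableOn_step _) (integrableOn_rX b i), integral_step hc,
          integral_rX b i hb]
        simp only [integral_sub (integrableOn_sketchIntegrand _ i α)
          (integrableOn_sketchIntegrand b i α)]

lemma sum_integral_exchange_le {m k : ℕ} (hk : 0 < k) {α : ℝ} (hα : 0 ≤ α)
    (b : Fin k → Fin m → ℝ) (c : Fin m → ℝ) (hb : ∀ j i, 0 ≤ b j i) (hc : ∀ i, 0 ≤ c i)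
    (hopt : ∀ j₀, rObj α (Function.update b j₀ c) ≤ rObj α b) :
    ∑ i, ((∫ u in Set.Ioi 0, step (c i) u * (1 - 2 * α * rX b i u))
        - ∫ u in Set.Ioi 0, sketchIntegrand (2 * α) (rX b i u))
      ≤ α / k * (aval c Finset.univ + (∑ j, aval (b j) Finset.univ) / k) := by
  have hgain_nonpos : ∑ j₀, (rObj α (Function.update b j₀ c) - rObj α b) ≤ 0 :=
    Finset.sum_nonpos fun j₀ _ => sub_nonpos.mpr (hopt j₀)
  have hval : ∑ i, (c i + (∑ j, b j i) / k)
      = aval c Finset.univ + (∑ j, aval (b j) Finset.univ) / k := by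
    rw [Finset.sum_add_distrib, ← Finset.sum_div, Finset.sum_comm]; rfl
  calc _ ≤ _ := Finset.sum_le_sum fun i _ =>
        setIntegral_exchange_gain_ge hk hα b c i (fun j => hb j i) (hc i)
    _ = ∑ j₀, (rObj α (Function.update b j₀ c) - rObj α b)
          + α / k * (aval c Finset.univ + (∑ j, aval (b j) Finset.univ) / k) := by
        rw [Finset.sum_add_distrib, Finset.sum_comm, ← Finset.mul_sum, hval]
        simp only [rObj, sketchIntegrand, Finset.sum_sub_distrib]
    _ ≤ _ := by linarith

lemma sub_le_setIntegral_step_mul {α a c : ℝ} (hα : α ≤ 1 / 2) (hac : a ≤ c) {f : ℝ → ℝ}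
    (hf : IntegrableOn f (Set.Ioi 0)) (hf0 : ∀ u, 0 ≤ f u) (hf1 : ∀ u, f u ≤ 1) :
    a - 2 * α * ∫ u in Set.Ioc 0 a, f u ≤ ∫ u in Set.Ioi 0, step c u * (1 - 2 * α * f u) := by
  have hone : ∀ d : ℝ, IntegrableOn (fun _ => (1 : ℝ)) (Set.Ioc 0 d) := fun _ =>
    integrableOn_const measure_Ioc_lt_top.ne
  have hf' : ∀ d, IntegrableOn f (Set.Ioc 0 d) := fun _ => hf.mono_set Set.Ioc_subset_Ioi_self
  have hg0 : ∀ u, 0 ≤ 1 - 2 * α * f u := fun u => by nlinarith [hf0 u, hf1 u]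
  rw [setIntegral_step_mul]
  calc a - 2 * α * ∫ u in Set.Ioc 0 a, f u
        ≤ volume.real (Set.Ioc 0 a) - 2 * α * ∫ u in Set.Ioc 0 a, f u := by
          rw [Real.volume_real_Ioc, sub_zero]; linarith [le_max_left a 0]
    _ = ∫ u in Set.Ioc 0 a, (1 - 2 * α * f u) := by
          rw [integral_sub (hone a) ((hf' a).const_mul _), integral_const_mul,
            setIntegral_const, smul_eq_mul, mul_one]
    _ ≤ ∫ u in Set.Ioc 0 c, (1 - 2 * α * f u) :=
          setIntegral_mono_set ((hone c).sub ((hf' c).const_mul _)) (Filter.Eventually.of_forall hg0)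
            (Set.Ioc_subset_Ioc_right hac).eventuallyLE

lemma clause_average_le_xosVal {m t k : ℕ} (hk : 0 < k) (C : Fin (t + 1) → Fin m → ℝ)
    (l : Fin (t + 1)) (σ : Fin k → Fin (t + 1)) :
    aval (C l) Finset.univ + (∑ j, aval (C (σ j)) Finset.univ) / k
      ≤ 2 * xosVal C Finset.univ := by
  have hv : ∀ l', aval (C l') Finset.univ ≤ xosVal C Finset.univ := fun l' =>
    Finset.le_sup' (fun j => aval (C j) Finset.univ) (Finset.mem_univ l')
  have havg : (∑ j, aval (C (σ j)) Finset.univ) / k ≤ xosVal C Finset.univ := by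
    rw [div_le_iff₀ (by exact_mod_cast hk)]
    calc ∑ j, aval (C (σ j)) Finset.univ ≤ ∑ _j : Fin k, xosVal C Finset.univ :=
          Finset.sum_le_sum fun j _ => hv (σ j)
      _ = xosVal C Finset.univ * k := by simp [mul_comm]
  linarith [hv l]

theorem stmt5_general {m t k : ℕ} (hk : 0 < k) (α : ℝ) (hα0 : 0 < α) (hα : α ≤ 1 / 2)
    (C : Fin (t + 1) → Fin m → ℝ) (hC : ∀ l i, 0 ≤ C l i)
    (σ : Fin k → Fin (t + 1)) (hσ : IsSketchR α C σ)
    (l : Fin (t + 1)) (a' : Fin m → ℝ) (ha' : ∀ i, a' i ≤ C l i) :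
    ∑ i, ((∫ u in Set.Ioi (0 : ℝ),
            (rX (fun j => C (σ j)) i u - 2 * α * (rX (fun j => C (σ j)) i u) ^ 2))
          + 2 * α * ∫ u in Set.Ioc (0 : ℝ) (a' i), rX (fun j => C (σ j)) i u)
      ≥ (∑ i, a' i) - 2 * α * xosVal C Finset.univ / k := by
  have hopt : ∀ j₀, rObj α (Function.update (fun j => C (σ j)) j₀ (C l))
      ≤ rObj α (fun j => C (σ j)) := fun j₀ => by
    simpa only [Function.apply_update (fun _ => C)] using hσ (Function.update σ j₀ l)
  have hexch := sum_integral_exchange_le hk hα0.le _ (C l) (fun j => hC (σ j)) (hC l) hopt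
  have hitems := Finset.sum_le_sum fun i (_ : i ∈ Finset.univ) =>
    sub_le_setIntegral_step_mul hα (ha' i) (integrableOn_rX (fun j => C (σ j)) i)
      (rX_nonneg _ i) (rX_le_one _ i)
  have herror : α / k * (aval (C l) Finset.univ + (∑ j, aval (C (σ j)) Finset.univ) / k)
      ≤ 2 * α * xosVal C Finset.univ / k := by
    calc _ ≤ α / k * (2 * xosVal C Finset.univ) :=
          mul_le_mul_of_nonneg_left (clause_average_le_xosVal hk C l σ) (by positivity)
      _ = _ := by ring
  simp only [sketchIntegrand, Finset.sum_sub_distrib] at hexch hitems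
  rw [ge_iff_le, Finset.sum_add_distrib]
  linarith

/-- the sketch inequality for general XOS valuations
(Lemma `lem:sketch` of the paper). -/
theorem stmt5 {m t k : ℕ} (hk : 0 < k) (α : ℝ) (hα0 : 0 < α) (hα : α ≤ 1 / 2)
    (C : Fin (t + 1) → Fin m → ℝ) (hC : ∀ l i, 0 ≤ C l i)
    (σ : Fin k → Fin (t + 1)) (hσ : IsSketchR α C σ)
    (l : Fin (t + 1)) (a' : Fin m → ℝ) (ha'0 : ∀ i, 0 ≤ a' i) (ha' : ∀ i, a' i ≤ C l i) :
    ∑ i, ((∫ u in Set.Ioi (0 : ℝ),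
            (rX (fun j => C (σ j)) i u - 2 * α * (rX (fun j => C (σ j)) i u) ^ 2))
          + 2 * α * ∫ u in Set.Ioc (0 : ℝ) (a' i), rX (fun j => C (σ j)) i u)
      ≥ (∑ i, a' i) - 2 * α * xosVal C Finset.univ / k :=
  stmt5_general hk α hα0 hα C hC σ hσ l a' ha'
end

section
/- Let x_1,…,x_m be reals with 0 ≤ x_i ≤ 1 for all i, let A and A' be disjoint subsets of [m], let V ≥ 0 be real, and let k > 0. If ∑_{i=1}^m (x_i − x_i²) + ∑_{i∈A} x_i ≥ |A| − V/k, then |A'| + ∑_{i∉A'} x_i ≥ (3/4)·(|A| + |A'|) − V/k. -/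
/-!
Pointwise, `t - t ^ 2 ≤ 1 / 4` and `t - t ^ 2 ≤ t`. Using the first bound on `A ∪ A'` and the
second on the remaining items, the sketch condition turns into the claimed lower bound.
-/

open Finset

lemma sub_sq_le_one_div_four (t : ℝ) : t - t ^ 2 ≤ 1 / 4 := by
  nlinarith [sq_nonneg (t - 1 / 2)]

section

variable {ι : Type*} (x : ι → ℝ)

lemma sum_sub_sq_le_card_div_four (s : Finset ι) :
    ∑ i ∈ s, (x i - x i ^ 2) ≤ #s / 4 := by
  calc ∑ i ∈ s, (x i - x i ^ 2) ≤ ∑ _i ∈ s, (1 / 4 : ℝ) :=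
        sum_le_sum fun i _ => sub_sq_le_one_div_four (x i)
    _ = #s / 4 := by rw [sum_const, nsmul_eq_mul]; ring

lemma sum_sub_sq_le_sum (s : Finset ι) : ∑ i ∈ s, (x i - x i ^ 2) ≤ ∑ i ∈ s, x i :=
  sum_le_sum fun i _ => by nlinarith [sq_nonneg (x i)]

lemma sum_sub_sq_add_sum_le_of_disjoint [Fintype ι] [DecidableEq ι] {A A' : Finset ι}
    (hdisj : Disjoint A A') :
    ∑ i, (x i - x i ^ 2) + ∑ i ∈ A, x i ≤ (#A + #A') / 4 + ∑ i ∈ A'ᶜ, x i := by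
  have hsub : A ⊆ A'ᶜ := subset_compl_iff_disjoint_right.mpr hdisj
  calc ∑ i, (x i - x i ^ 2) + ∑ i ∈ A, x i
      = ∑ i ∈ A', (x i - x i ^ 2) + (∑ i ∈ A'ᶜ \ A, (x i - x i ^ 2)
          + ∑ i ∈ A, (x i - x i ^ 2)) + ∑ i ∈ A, x i := by
        rw [sum_sdiff hsub, sum_add_sum_compl]
    _ ≤ #A' / 4 + (∑ i ∈ A'ᶜ \ A, x i + #A / 4) + ∑ i ∈ A, x i := by
        gcongr ?_ + (?_ + ?_) + _
        · exact sum_sub_sq_le_card_div_four x A'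
        · exact sum_sub_sq_le_sum x _
        · exact sum_sub_sq_le_card_div_four x A
    _ = (#A + #A') / 4 + ∑ i ∈ A'ᶜ, x i := by
        rw [← sum_sdiff hsub]; ring

end

theorem stmt7_general {m : ℕ} (x : Fin m → ℝ)
    (A A' : Finset (Fin m)) (hdisj : Disjoint A A')
    (V : ℝ) (k : ℝ)
    (h : ∑ i, (x i - (x i) ^ 2) + ∑ i ∈ A, x i ≥ (A.card : ℝ) - V / k) :
    (A'.card : ℝ) + ∑ i ∈ A'ᶜ, x i
      ≥ (3 / 4 : ℝ) * ((A.card : ℝ) + (A'.card : ℝ)) - V / k := by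
  linarith [sum_sub_sq_add_sum_le_of_disjoint x hdisj]

/-- the core algebraic inequality behind the `(3/4 − 1/k)`-approximation of
the `(k,1/2)`-sketch protocol for two binary XOS bidders. -/
theorem stmt7 {m : ℕ} (x : Fin m → ℝ) (hx0 : ∀ i, 0 ≤ x i) (hx1 : ∀ i, x i ≤ 1)
    (A A' : Finset (Fin m)) (hdisj : Disjoint A A')
    (V : ℝ) (hV : 0 ≤ V) (k : ℝ) (hk : 0 < k)
    (h : ∑ i, (x i - (x i) ^ 2) + ∑ i ∈ A, x i ≥ (A.card : ℝ) - V / k) :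
    (A'.card : ℝ) + ∑ i ∈ A'ᶜ, x i
      ≥ (3 / 4 : ℝ) * ((A.card : ℝ) + (A'.card : ℝ)) - V / k :=
  stmt7_general x A A' hdisj V k h
end

section
/- Let k ≥ 2 be an integer, let C be a real with 1/2 ≤ C ≤ 1, let x_1,…,x_m be reals with 0 ≤ x_i ≤ 1 for all i, and let A1 and A' be disjoint subsets of [m]. Assume (i) ∑_{i=1}^m (x_i − x_i²) + ∑_{i∈A1} x_i ≥ |A1| − (|A1| + ∑_{i=1}^m x_i)/(2k), and (ii) ∑_{i∉A'} x_i ≤ |A1|. Then ∑_{i=1}^m x_i + (C − 1/k)·(|A'| − ∑_{i∈A'} x_i) ≥ (1 − 1/(4C) − 1/k)·(|A1| + |A'|). -/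
open Finset

/-!
Write `t = 1/k` and `d = 1/(4C)`. The goal minus `C` times (i) and `t/2` times (ii) is exactly a
sum over items of a quadratic in `y = x i`, whose shape depends only on whether the item lies in
`A1`, in `A'` or in neither. Each of these quadratics is nonnegative for `y ≥ 0`. For items of
`A1` or `A'` it is, up to a term that is nonnegative because `C ≤ 1`, the perfect square
`C y² + (1 - 2C) y + C - 1 + d = (2Cy + 1 - 2C)² / (4C)`; this is where `d` comes from. For the
remaining items all its coefficients are nonnegative.
-/

lemma sum_add_sum_add_sum_compl_union {ι M : Type*} [Fintype ι] [DecidableEq ι]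
    [AddCommMonoid M] {s t : Finset ι} (h : Disjoint s t) (f : ι → M) :
    ∑ i ∈ s, f i + ∑ i ∈ t, f i + ∑ i ∈ (s ∪ t)ᶜ, f i = ∑ i, f i := by
  rw [← sum_union h, sum_add_sum_compl]

lemma sum_quadratic {ι : Type*} (s : Finset ι) (x : ι → ℝ) (p q r : ℝ) :
    ∑ i ∈ s, (p * x i ^ 2 + q * x i + r)
      = p * ∑ i ∈ s, x i ^ 2 + q * ∑ i ∈ s, x i + r * #s := by
  simp only [sum_add_distrib, ← mul_sum, sum_const, nsmul_eq_mul]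
  ring

section ItemSlack

variable {C t y : ℝ}

lemma tangent_parabola_nonneg (hC : 0 < C) (y : ℝ) :
    0 ≤ C * y ^ 2 + (1 - 2 * C) * y + (C - 1 + 1 / (4 * C)) := by
  have hsq : C * y ^ 2 + (1 - 2 * C) * y + (C - 1 + 1 / (4 * C))
      = (2 * C * y + 1 - 2 * C) ^ 2 / (4 * C) := by
    field_simp
    ring
  rw [hsq]
  positivity

variable (hC : 0 < C) (hC1 : C ≤ 1) (ht : 0 ≤ t) (hy : 0 ≤ y)
include hC hC1 ht hy

lemma first_bidder_item_nonneg :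
    0 ≤ C * y ^ 2 + (1 - 2 * C + t / 2 - C * t / 2) * y
      + (C - 1 + 1 / (4 * C) + t / 2 - C * t / 2) := by
  have hextra : 0 ≤ t / 2 * (1 - C) * (y + 1) := by
    have : 0 ≤ 1 - C := by linarith
    positivity
  linear_combination tangent_parabola_nonneg hC y + hextra

lemma other_bidders_item_nonneg :
    0 ≤ C * y ^ 2 + (1 - 2 * C + t - C * t / 2) * y + (C - 1 + 1 / (4 * C)) := by
  have hextra : 0 ≤ t * (1 - C / 2) * y := by
    have : 0 ≤ 1 - C / 2 := by linarith
    positivity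
  linear_combination tangent_parabola_nonneg hC y + hextra

lemma unallocated_item_nonneg :
    0 ≤ C * y ^ 2 + (1 - C + t / 2 - C * t / 2) * y := by
  have : 0 ≤ 1 - C := by linarith
  have hextra : 0 ≤ (1 - C) * (1 + t / 2) * y := by positivity
  linear_combination hextra + mul_nonneg hC.le (sq_nonneg y)

end ItemSlack

theorem stmt8_general {m : ℕ} (k : ℕ) (C : ℝ) (hC1 : 1 / 2 ≤ C) (hC2 : C ≤ 1)
    (x : Fin m → ℝ) (hx0 : ∀ i, 0 ≤ x i)
    (A1 A' : Finset (Fin m)) (hdisj : Disjoint A1 A')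
    (h1 : ∑ i, (x i - (x i) ^ 2) + ∑ i ∈ A1, x i
      ≥ (A1.card : ℝ) - ((A1.card : ℝ) + ∑ i, x i) / (2 * k))
    (h2 : ∑ i ∈ A'ᶜ, x i ≤ (A1.card : ℝ)) :
    ∑ i, x i + (C - 1 / k) * ((A'.card : ℝ) - ∑ i ∈ A', x i)
      ≥ (1 - 1 / (4 * C) - 1 / k) * ((A1.card : ℝ) + (A'.card : ℝ)) := by
  have hC : 0 < C := by linarith
  have ht : (0 : ℝ) ≤ 1 / k := by positivity
  have hA1 := sum_nonneg fun i (_ : i ∈ A1) => first_bidder_item_nonneg hC hC2 ht (hx0 i)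
  have hA' := sum_nonneg fun i (_ : i ∈ A') => other_bidders_item_nonneg hC hC2 ht (hx0 i)
  have hR := sum_nonneg fun i (_ : i ∈ (A1 ∪ A')ᶜ) => unallocated_item_nonneg hC hC2 ht (hx0 i)
  rw [sum_quadratic] at hA1 hA'
  rw [sum_add_distrib, ← mul_sum, ← mul_sum] at hR
  have hx := sum_add_sum_add_sum_compl_union hdisj x
  have hx2 := sum_add_sum_add_sum_compl_union hdisj (x · ^ 2)
  have hA'c := sum_add_sum_compl A' x
  rw [sum_sub_distrib] at h1
  linear_combination mul_nonneg hC.le (sub_nonneg.2 h1) + 1 / (2 * k) * h2 + hA1 + hA' + hR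
    + (1 - C + (1 - C) / (2 * k)) * hx + C * hx2 - (1 / (2 * k)) * hA'c

/-- the key inductive inequality behind the `(1/2 − 1/k)`-approximation of
the sequential sketch protocol for `n` binary XOS bidders. -/
theorem stmt8 {m : ℕ} (k : ℕ) (hk : 2 ≤ k) (C : ℝ) (hC1 : 1 / 2 ≤ C) (hC2 : C ≤ 1)
    (x : Fin m → ℝ) (hx0 : ∀ i, 0 ≤ x i) (hx1 : ∀ i, x i ≤ 1)
    (A1 A' : Finset (Fin m)) (hdisj : Disjoint A1 A')
    (h1 : ∑ i, (x i - (x i) ^ 2) + ∑ i ∈ A1, x i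
      ≥ (A1.card : ℝ) - ((A1.card : ℝ) + ∑ i, x i) / (2 * k))
    (h2 : ∑ i ∈ A'ᶜ, x i ≤ (A1.card : ℝ)) :
    ∑ i, x i + (C - 1 / k) * ((A'.card : ℝ) - ∑ i ∈ A', x i)
      ≥ (1 - 1 / (4 * C) - 1 / k) * ((A1.card : ℝ) + (A'.card : ℝ)) :=
  stmt8_general k C hC1 hC2 x hx0 A1 A' hdisj h1 h2
end

section
/- Let m be a positive integer divisible by 6, and let S, T ⊆ [m] with |S| = |T| = m/2 and |S ∩ T| = m/3. Let A be drawn uniformly at random from all sets X ⊆ [m] with |X ∩ S| = m/3 and |X ∩ ([m] ∖ S)| = m/6, and independently let B be drawn uniformly at random from all sets X ⊆ [m] with |X ∩ T| = m/3 and |X ∩ ([m] ∖ T)| = m/6. Then E[|A ∪ B|] = 20m/27. -/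
/-!
By linearity of expectation and independence of `A` and `B`,
`E|A ∪ B| = ∑ₓ (1 - (1 - P[x ∈ A]) (1 - P[x ∈ B]))`, where `P[x ∈ A]` is `memFrac`.
A permutation preserving `S` preserves Alice's family, so `P[x ∈ A]` is constant on `S` and on
`Sᶜ`; double counting the pairs `(x, A)` with `x ∈ A ∩ S` (resp. `A ∩ Sᶜ`) then gives
`P[x ∈ A] = 2/3` on `S` and `1/3` off `S`. The four regions `S ∩ T`, `S \ T`, `T \ S` and the
rest have sizes `m/3, m/6, m/6, m/3` and contribute `8/9, 7/9, 7/9, 5/9` per point, which adds up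
to `20m/27`.
-/

open Finset

/-- The family of "random clauses" correlated with a hidden set `S`: all sets `X ⊆ [m]`
with `|X ∩ S| = m/3` and `|X ∩ ([m] ∖ S)| = m/6`. -/
def clauseFamily {m : ℕ} (S : Finset (Fin m)) : Finset (Finset (Fin m)) :=
  Finset.univ.filter fun X => (X ∩ S).card = m / 3 ∧ (X ∩ Sᶜ).card = m / 6

section Family

variable {α : Type*}

lemma map_perm_eq_self {S : Finset α} {σ : Equiv.Perm α} (hσ : ∀ x, σ x ∈ S ↔ x ∈ S) :
    S.map σ.toEmbedding = S := by
  ext y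
  simpa using (hσ (σ.symm y)).symm

variable [DecidableEq α]

noncomputable def memFrac (F : Finset (Finset α)) (x : α) : ℝ := #{A ∈ F | x ∈ A} / #F

lemma one_sub_memFrac {F : Finset (Finset α)} (hF : F.Nonempty) (x : α) :
    1 - memFrac F x = #{A ∈ F | x ∉ A} / #F := by
  have hsplit := card_filter_add_card_filter_not (s := F) (fun A => x ∈ A)
  have hpos : (#F : ℝ) ≠ 0 := by exact_mod_cast hF.card_pos.ne'
  rw [memFrac, eq_div_iff hpos, sub_mul, div_mul_cancel₀ _ hpos, ← hsplit]
  push_cast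
  ring

lemma card_union_eq_sum_one_sub_mul [Fintype α] (A B : Finset α) :
    (#(A ∪ B) : ℝ) = ∑ x, (1 - (if x ∉ A then 1 else 0) * (if x ∉ B then 1 else 0)) := by
  rw [← filter_univ_mem (A ∪ B), ← sum_boole]
  refine sum_congr rfl fun x _ => ?_
  by_cases hA : x ∈ A <;> by_cases hB : x ∈ B <;> simp [hA, hB]

theorem sum_sum_card_union_div [Fintype α] {F G : Finset (Finset α)} (hF : F.Nonempty)
    (hG : G.Nonempty) :
    (∑ A ∈ F, ∑ B ∈ G, (#(A ∪ B) : ℝ)) / (#F * #G)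
      = ∑ x, (1 - (1 - memFrac F x) * (1 - memFrac G x)) := by
  have hFpos : (#F : ℝ) ≠ 0 := by exact_mod_cast hF.card_pos.ne'
  have hGpos : (#G : ℝ) ≠ 0 := by exact_mod_cast hG.card_pos.ne'
  have hswap : ∑ A ∈ F, ∑ B ∈ G, (#(A ∪ B) : ℝ)
      = ∑ x, ((#F : ℝ) * #G - #{A ∈ F | x ∉ A} * #{B ∈ G | x ∉ B}) := by
    simp_rw [card_union_eq_sum_one_sub_mul]
    rw [sum_congr rfl fun A _ => sum_comm, sum_comm]
    refine sum_congr rfl fun x _ => ?_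
    rw [← sum_boole, ← sum_boole, sum_mul_sum]
    simp [sum_sub_distrib]
  rw [hswap, sum_div]
  refine sum_congr rfl fun x _ => ?_
  rw [one_sub_memFrac hF, one_sub_memFrac hG]
  field_simp

lemma card_filter_apply_mem_eq {F : Finset (Finset α)} (σ : Equiv.Perm α)
    (hF : ∀ A, A.map σ.toEmbedding ∈ F ↔ A ∈ F) (x : α) :
    #{A ∈ F | σ x ∈ A} = #{A ∈ F | x ∈ A} := by
  symm
  refine card_equiv σ.finsetCongr fun A => ?_
  simp [hF]

lemma memFrac_eq_div {F : Finset (Finset α)} {U : Finset α} {x : α} {c : ℕ}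
    (hF : F.Nonempty) (hU : U.Nonempty)
    (hconst : ∀ y ∈ U, #{A ∈ F | y ∈ A} = #{A ∈ F | x ∈ A})
    (hc : ∀ A ∈ F, #(A ∩ U) = c) :
    memFrac F x = c / #U := by
  have hcount : #{A ∈ F | x ∈ A} * #U = c * #F := by
    rw [mul_comm, ← sum_card_inter hconst,
      sum_congr rfl fun A hA => (inter_comm U A ▸ hc A hA), sum_const, smul_eq_mul, mul_comm]
  have hFpos : (#F : ℝ) ≠ 0 := by exact_mod_cast hF.card_pos.ne'
  have hUpos : (#U : ℝ) ≠ 0 := by exact_mod_cast hU.card_pos.ne'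
  rw [memFrac, div_eq_div_iff hFpos hUpos]
  exact_mod_cast hcount

lemma sum_one_sub_mul_one_sub_ite [Fintype α] (S T : Finset α) :
    ∑ x, (1 - (1 - if x ∈ S then (2 / 3 : ℝ) else 1 / 3)
        * (1 - if x ∈ T then 2 / 3 else 1 / 3))
      = (5 * Fintype.card α + 2 * #S + 2 * #T - #(S ∩ T)) / 9 := by
  have hpoint : ∀ x, (1 - (1 - if x ∈ S then (2 / 3 : ℝ) else 1 / 3)
      * (1 - if x ∈ T then 2 / 3 else 1 / 3))
      = (5 + 2 * (if x ∈ S then 1 else 0) + 2 * (if x ∈ T then 1 else 0)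
          - (if x ∈ S ∩ T then 1 else 0)) / 9 := by
    intro x
    by_cases hS : x ∈ S <;> by_cases hT : x ∈ T <;> norm_num [hS, hT]
  rw [sum_congr rfl fun x _ => hpoint x, ← sum_div, sum_sub_distrib, sum_add_distrib,
    sum_add_distrib, ← mul_sum, ← mul_sum]
  simp only [sum_boole, filter_univ_mem, sum_const, card_univ, nsmul_eq_mul]
  ring

end Family

section ClauseFamily

variable {m : ℕ} {S : Finset (Fin m)}

lemma map_mem_clauseFamily_iff {σ : Equiv.Perm (Fin m)} (hσ : ∀ x, σ x ∈ S ↔ x ∈ S)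
    (A : Finset (Fin m)) : A.map σ.toEmbedding ∈ clauseFamily S ↔ A ∈ clauseFamily S := by
  have hcard : ∀ U : Finset (Fin m), U.map σ.toEmbedding = U →
      #(A.map σ.toEmbedding ∩ U) = #(A ∩ U) := fun U hU => by
    rw [← hU, ← map_inter, card_map, hU]
  have hSc : Sᶜ.map σ.toEmbedding = Sᶜ := map_perm_eq_self fun x => by simpa using (hσ x).not
  simp only [clauseFamily, mem_filter, mem_univ, true_and, hcard S (map_perm_eq_self hσ),
    hcard Sᶜ hSc]

lemma card_filter_mem_clauseFamily_eq {x y : Fin m} (hxy : y ∈ S ↔ x ∈ S) :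
    #{A ∈ clauseFamily S | y ∈ A} = #{A ∈ clauseFamily S | x ∈ A} := by
  have hswap : ∀ z, Equiv.swap x y z ∈ S ↔ z ∈ S := by
    intro z
    rcases eq_or_ne z x with rfl | hzx
    · simp [hxy]
    rcases eq_or_ne z y with rfl | hzy
    · simp [hxy]
    · rw [Equiv.swap_apply_of_ne_of_ne hzx hzy]
  simpa using card_filter_apply_mem_eq (Equiv.swap x y) (map_mem_clauseFamily_iff hswap) x

lemma clauseFamily_nonempty (h₁ : m / 3 ≤ #S) (h₂ : m / 6 ≤ #Sᶜ) :
    (clauseFamily S).Nonempty := by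
  obtain ⟨X, hXS, hX⟩ := exists_subset_card_eq h₁
  obtain ⟨Y, hYS, hY⟩ := exists_subset_card_eq h₂
  refine ⟨X ∪ Y, mem_filter.2 ⟨mem_univ _, ?_, ?_⟩⟩
  · rw [union_inter_distrib_right, inter_eq_left.2 hXS,
      disjoint_iff_inter_eq_empty.1 (subset_compl_iff_disjoint_right.1 hYS), union_empty, hX]
  · rw [union_inter_distrib_right, inter_eq_left.2 hYS,
      disjoint_iff_inter_eq_empty.1 (subset_compl_iff_disjoint_right.1 (by simpa using hXS)),
      empty_union, hY]

lemma memFrac_clauseFamily (h6 : 6 ∣ m) (hS : #S = m / 2) (x : Fin m) :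
    memFrac (clauseFamily S) x = if x ∈ S then 2 / 3 else 1 / 3 := by
  obtain ⟨k, rfl⟩ := h6
  have hk : 0 < k := by have := Fin.pos x; omega
  have hSc : #Sᶜ = 3 * k := by rw [card_compl, Fintype.card_fin]; omega
  have hne := clauseFamily_nonempty (S := S) (by omega) (by omega)
  split_ifs with hx
  · rw [memFrac_eq_div hne ⟨x, hx⟩
      (fun y hy => card_filter_mem_clauseFamily_eq (iff_of_true hy hx))
      (fun A hA => (mem_filter.1 hA).2.1), hS,
      show 6 * k / 2 = 3 * k by omega, show 6 * k / 3 = 2 * k by omega]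
    field_simp
    push_cast
    ring
  · rw [memFrac_eq_div hne ⟨x, mem_compl.2 hx⟩
      (fun y hy => card_filter_mem_clauseFamily_eq (iff_of_false (mem_compl.1 hy) hx))
      (fun A hA => (mem_filter.1 hA).2.2), hSc, show 6 * k / 6 = k by omega]
    field_simp
    push_cast
    ring

end ClauseFamily

theorem stmt14_general {m : ℕ} (h6 : 6 ∣ m)
    (S T : Finset (Fin m)) (hS : S.card = m / 2) (hT : T.card = m / 2)
    (hST : (S ∩ T).card = m / 3) :
    (∑ A ∈ clauseFamily S, ∑ B ∈ clauseFamily T, ((A ∪ B).card : ℝ))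
        / (((clauseFamily S).card : ℝ) * ((clauseFamily T).card : ℝ))
      = 20 * m / 27 := by
  have hne : ∀ U : Finset (Fin m), #U = m / 2 → (clauseFamily U).Nonempty := fun U hU =>
    clauseFamily_nonempty (by omega) (by rw [card_compl, Fintype.card_fin]; omega)
  rw [sum_sum_card_union_div (hne S hS) (hne T hT)]
  simp only [memFrac_clauseFamily h6 hS, memFrac_clauseFamily h6 hT]
  rw [sum_one_sub_mul_one_sub_ite, Fintype.card_fin, hS, hT, hST]
  obtain ⟨k, rfl⟩ := h6
  rw [show 6 * k / 2 = 3 * k by omega, show 6 * k / 3 = 2 * k by omega]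
  push_cast
  ring

/-- if `A` and `B` are drawn independently and uniformly from the clause
families of `S` and `T` respectively, where `|S| = |T| = m/2` and `|S ∩ T| = m/3`, then
`E[|A ∪ B|] = 20m/27`. -/
theorem stmt14 {m : ℕ} (hm : 0 < m) (h6 : 6 ∣ m)
    (S T : Finset (Fin m)) (hS : S.card = m / 2) (hT : T.card = m / 2)
    (hST : (S ∩ T).card = m / 3) :
    (∑ A ∈ clauseFamily S, ∑ B ∈ clauseFamily T, ((A ∪ B).card : ℝ))
        / (((clauseFamily S).card : ℝ) * ((clauseFamily T).card : ℝ))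
      = 20 * m / 27 :=
  stmt14_general h6 S T hS hT hST
end

section
/- Let m be a positive integer divisible by 6, and let S, T ⊆ [m] with |S| = |T| = m/2 and |S ∩ T| = m/3. Let A be drawn uniformly at random from all sets X ⊆ [m] with |X ∩ S| = m/3 and |X ∩ ([m] ∖ S)| = m/6, and independently let B be drawn uniformly at random from all sets X ⊆ [m] with |X ∩ T| = m/3 and |X ∩ ([m] ∖ T)| = m/6. Then the Bernoulli random variables X_i = 1[i ∈ A ∪ B], for i ∈ [m], are negatively correlated: for every I ⊆ [m], Pr[∀ i ∈ I, X_i = 1] ≤ ∏_{i ∈ I} Pr[X_i = 1]. -/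
/-!
A clause drawn from `clauseFamily S` is the union of two independent uniform slices: a uniform
`m/3`-subset of `S` and a uniform `m/6`-subset of `Sᶜ`. A uniform `k`-subset of an `n`-set
contains a fixed `j`-set with probability `k(k-1)⋯(k-j+1) / (n(n-1)⋯(n-j+1)) ≤ (k/n)^j`, so
slices are negatively correlated. Negative correlation survives unions of independent random
sets: writing `p i = Pr[i ∈ A]`, `q i = Pr[i ∈ B]` and conditioning on `B`,
`Pr[I ⊆ A ∪ B | B] ≤ ∏_{i ∈ I \ B} p i = ∑_{K ⊆ I, K ⊆ B} ∏_{i ∈ K} (1 - p i) ∏_{i ∈ I \ K} p i`,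
a nonnegative combination of the events `K ⊆ B`; averaging over `B` and bounding
`Pr[K ⊆ B] ≤ ∏_{i ∈ K} q i` gives `∏_{i ∈ I} (p i + (1 - p i) q i) = ∏_{i ∈ I} Pr[i ∈ A ∪ B]`.
Applying this twice (within one clause, then to `A ∪ B`) proves the theorem.
-/

open Finset

section UniformProb

variable {β γ : Type*}

noncomputable def uniformProb (Ω : Finset β) (E : β → Prop) [DecidablePred E] : ℝ :=
  #(Ω.filter E) / #Ω

variable {Ω : Finset β} {E E' : β → Prop} [DecidablePred E] [DecidablePred E']

lemma uniformProb_nonneg : 0 ≤ uniformProb Ω E := by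
  unfold uniformProb; positivity

lemma uniformProb_le_one : uniformProb Ω E ≤ 1 :=
  div_le_one_of_le₀ (by exact_mod_cast card_filter_le _ _) (by positivity)

lemma uniformProb_eq_zero (h : ∀ ω ∈ Ω, ¬ E ω) : uniformProb Ω E = 0 := by
  simp [uniformProb, filter_false_of_mem h]

lemma uniformProb_congr (h : ∀ ω ∈ Ω, E ω ↔ E' ω) : uniformProb Ω E = uniformProb Ω E' := by
  rw [uniformProb, uniformProb, filter_congr h]

lemma uniformProb_not (hΩ : Ω.Nonempty) : uniformProb Ω (¬ E ·) = 1 - uniformProb Ω E := by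
  have hcard : (#(Ω.filter E) : ℝ) + #(Ω.filter (¬ E ·)) = #Ω := by
    exact_mod_cast card_filter_add_card_filter_not E
  have hpos : (0 : ℝ) < #Ω := by exact_mod_cast hΩ.card_pos
  rw [uniformProb, uniformProb, eq_sub_iff_add_eq, ← add_div, add_comm, hcard, div_self hpos.ne']

lemma uniformProb_product (Ω : Finset β) (Ω' : Finset γ) (E : β → Prop) (E' : γ → Prop)
    [DecidablePred E] [DecidablePred E'] :
    uniformProb (Ω ×ˢ Ω') (fun ω => E ω.1 ∧ E' ω.2) = uniformProb Ω E * uniformProb Ω' E' := by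
  simp only [uniformProb, filter_product, card_product, Nat.cast_mul]
  ring

lemma uniformProb_product_eq_sum (Ω : Finset β) (Ω' : Finset γ) (E : β × γ → Prop)
    [DecidablePred E] :
    uniformProb (Ω ×ˢ Ω') E = (∑ ω' ∈ Ω', uniformProb Ω (fun ω => E (ω, ω'))) / #Ω' := by
  have hcount : #((Ω ×ˢ Ω').filter E) = ∑ ω' ∈ Ω', #(Ω.filter fun ω => E (ω, ω')) := by
    simp only [card_filter, sum_product_right]
  simp only [uniformProb, ← sum_div, div_div, hcount, card_product, Nat.cast_mul, Nat.cast_sum]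

lemma uniformProb_image [DecidableEq γ] {e : β → γ} (he : Set.InjOn e Ω) (E : γ → Prop)
    [DecidablePred E] : uniformProb (Ω.image e) E = uniformProb Ω (fun ω => E (e ω)) := by
  rw [uniformProb, filter_image, card_image_of_injOn he,
    card_image_of_injOn (he.mono (filter_subset _ _)), uniformProb]

end UniformProb

section Expansion

variable {ι R : Type*} [DecidableEq ι] [CommRing R]

lemma prod_sdiff_eq_sum_powerset_filter_subset (p : ι → R) (I B : Finset ι) :
    ∏ i ∈ I \ B, p i = ∑ K ∈ I.powerset with K ⊆ B, (∏ i ∈ K, (1 - p i)) * ∏ i ∈ I \ K, p i := by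
  calc ∏ i ∈ I \ B, p i = ∏ i ∈ I, ((1 - p i) * (if i ∈ B then 1 else 0) + p i) := by
        rw [sdiff_eq_filter, prod_filter]
        refine prod_congr rfl fun i _ => ?_
        split_ifs <;> ring
    _ = ∑ K ∈ I.powerset, if K ⊆ B then (∏ i ∈ K, (1 - p i)) * ∏ i ∈ I \ K, p i else 0 := by
        rw [prod_add]
        refine sum_congr rfl fun K _ => ?_
        rw [prod_mul_distrib, prod_boole]
        by_cases hKB : K ⊆ B
        · rw [if_pos hKB, if_pos fun i hi => hKB hi, mul_one]
        · rw [if_neg hKB, if_neg fun h => hKB fun i hi => h i hi, mul_zero, zero_mul]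
    _ = _ := (sum_filter _ _).symm

lemma prod_add_one_sub_mul_eq_sum_powerset (p q : ι → R) (I : Finset ι) :
    ∏ i ∈ I, (p i + (1 - p i) * q i) =
      ∑ K ∈ I.powerset, (∏ i ∈ K, (1 - p i)) * (∏ i ∈ I \ K, p i) * ∏ i ∈ K, q i := by
  simp_rw [add_comm (p _), prod_add, prod_mul_distrib]
  exact sum_congr rfl fun K _ => by ring

end Expansion

section NegCorrelated

variable {α β γ : Type*} [DecidableEq α]

/-- `X ω`, for `ω` uniform on `Ω`, is a random subset of `α`; independent random subsets are
modelled on a product `Ω ×ˢ Ω'`. -/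
def NegCorrelated (Ω : Finset β) (X : β → Finset α) : Prop :=
  ∀ I : Finset α, uniformProb Ω (I ⊆ X ·) ≤ ∏ i ∈ I, uniformProb Ω (i ∈ X ·)

lemma NegCorrelated.image [DecidableEq γ] {Ω : Finset β} {X : γ → Finset α} {e : β → γ}
    (he : Set.InjOn e Ω) (h : NegCorrelated Ω fun ω => X (e ω)) :
    NegCorrelated (Ω.image e) X := fun I => by
  simpa only [uniformProb_image he] using h I

lemma uniformProb_mem_union {Ω : Finset β} {Ω' : Finset γ} (hΩ : Ω.Nonempty) (hΩ' : Ω'.Nonempty)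
    (X : β → Finset α) (Y : γ → Finset α) (i : α) :
    uniformProb (Ω ×ˢ Ω') (fun ω => i ∈ X ω.1 ∪ Y ω.2) =
      uniformProb Ω (i ∈ X ·) + (1 - uniformProb Ω (i ∈ X ·)) * uniformProb Ω' (i ∈ Y ·) := by
  rw [uniformProb_congr (E' := fun ω => ¬ (i ∉ X ω.1 ∧ i ∉ Y ω.2))
      (fun ω _ => by simp [or_iff_not_and_not]),
    uniformProb_not (hΩ.product hΩ'), uniformProb_product Ω Ω' (i ∉ X ·) (i ∉ Y ·),
    uniformProb_not hΩ, uniformProb_not hΩ']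
  ring

theorem NegCorrelated.union {Ω : Finset β} {Ω' : Finset γ} {X : β → Finset α} {Y : γ → Finset α}
    (hX : NegCorrelated Ω X) (hY : NegCorrelated Ω' Y) :
    NegCorrelated (Ω ×ˢ Ω') fun ω => X ω.1 ∪ Y ω.2 := by
  intro I
  rcases (Ω ×ˢ Ω').eq_empty_or_nonempty with hempty | hne
  · rw [hempty, uniformProb_eq_zero (by simp)]
    exact prod_nonneg fun _ _ => uniformProb_nonneg
  obtain ⟨hΩ, hΩ'⟩ := nonempty_product.mp hne
  set p : α → ℝ := fun i => uniformProb Ω (i ∈ X ·)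
  set q : α → ℝ := fun i => uniformProb Ω' (i ∈ Y ·)
  set w : Finset α → ℝ := fun K => (∏ i ∈ K, (1 - p i)) * ∏ i ∈ I \ K, p i
  have hw : ∀ K, 0 ≤ w K := fun K =>
    mul_nonneg (prod_nonneg fun i _ => sub_nonneg.mpr uniformProb_le_one)
      (prod_nonneg fun i _ => uniformProb_nonneg)
  rw [prod_congr rfl fun i _ => uniformProb_mem_union hΩ hΩ' X Y i, uniformProb_product_eq_sum]
  calc (∑ ω' ∈ Ω', uniformProb Ω fun ω => I ⊆ X ω ∪ Y ω') / #Ω'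
      ≤ (∑ ω' ∈ Ω', ∏ i ∈ I \ Y ω', p i) / #Ω' := by
        gcongr with ω'
        rw [uniformProb_congr (E := fun ω => I ⊆ X ω ∪ Y ω') (E' := fun ω => I \ Y ω' ⊆ X ω)
          fun ω _ => sdiff_le_iff'.symm]
        exact hX _
    _ = ∑ K ∈ I.powerset, w K * uniformProb Ω' (K ⊆ Y ·) := by
        rw [sum_congr rfl fun ω' _ => prod_sdiff_eq_sum_powerset_filter_subset p I (Y ω')]
        simp only [sum_filter, uniformProb, mul_div_assoc', ← sum_div]
        rw [sum_comm]
        refine congrArg (· / _) (sum_congr rfl fun K _ => ?_)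
        rw [← sum_filter, sum_const, nsmul_eq_mul, mul_comm]
    _ ≤ ∑ K ∈ I.powerset, w K * ∏ i ∈ K, q i := by
        gcongr with K
        · exact hw K
        · exact hY K
    _ = ∏ i ∈ I, (p i + (1 - p i) * q i) := (prod_add_one_sub_mul_eq_sum_powerset p q I).symm

end NegCorrelated

lemma Nat.descFactorial_mul_pow_le {k n : ℕ} (hkn : k ≤ n) (j : ℕ) :
    k.descFactorial j * n ^ j ≤ n.descFactorial j * k ^ j := by
  induction j with
  | zero => simp
  | succ j ih =>
    have hstep : (k - j) * n ≤ (n - j) * k := by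
      rw [Nat.sub_mul, Nat.sub_mul, mul_comm k n]
      exact Nat.sub_le_sub_left (Nat.mul_le_mul_left j hkn) _
    calc k.descFactorial (j + 1) * n ^ (j + 1)
        = ((k - j) * n) * (k.descFactorial j * n ^ j) := by
          rw [Nat.descFactorial_succ, pow_succ]; ring
      _ ≤ ((n - j) * k) * (n.descFactorial j * k ^ j) := Nat.mul_le_mul hstep ih
      _ = n.descFactorial (j + 1) * k ^ (j + 1) := by
          rw [Nat.descFactorial_succ, pow_succ]; ring

section Slice

variable {α : Type*} [DecidableEq α] {U J : Finset α} {k : ℕ}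

lemma card_filter_powersetCard_subset_mul_descFactorial (hJU : J ⊆ U) :
    #((U.powersetCard k).filter (J ⊆ ·)) * (#U).descFactorial #J =
      (#U).choose k * k.descFactorial #J := by
  rcases le_or_gt #J k with hJk | hkJ
  · rw [card_filter_powersetCard_subset J U k hJU hJk, Nat.descFactorial_eq_factorial_mul_choose,
      Nat.descFactorial_eq_factorial_mul_choose]
    calc (#U - #J).choose (k - #J) * (Nat.factorial #J * (#U).choose #J)
        = Nat.factorial #J * ((#U).choose #J * (#U - #J).choose (k - #J)) := by ring
      _ = (#U).choose k * (Nat.factorial #J * k.choose #J) := by rw [← Nat.choose_mul hJk]; ring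
  · have hempty : (U.powersetCard k).filter (J ⊆ ·) = ∅ :=
      filter_false_of_mem fun X hX hJX =>
        (card_le_card hJX).not_gt ((mem_powersetCard.mp hX).2 ▸ hkJ)
    rw [hempty, Nat.descFactorial_eq_zero_iff_lt.mpr hkJ]
    simp

lemma uniformProb_powersetCard_subset (hJU : J ⊆ U) (hkU : k ≤ #U) :
    uniformProb (U.powersetCard k) (J ⊆ ·) = k.descFactorial #J / (#U).descFactorial #J := by
  have hchoose : ((#U).choose k : ℝ) ≠ 0 := by exact_mod_cast (Nat.choose_pos hkU).ne'
  have hdesc : ((#U).descFactorial #J : ℝ) ≠ 0 := by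
    exact_mod_cast (Nat.descFactorial_pos.mpr (card_le_card hJU)).ne'
  rw [uniformProb, card_powersetCard, div_eq_div_iff hchoose hdesc,
    mul_comm (k.descFactorial #J : ℝ)]
  exact_mod_cast card_filter_powersetCard_subset_mul_descFactorial hJU

lemma uniformProb_powersetCard_mem {i : α} (hi : i ∈ U) (hkU : k ≤ #U) :
    uniformProb (U.powersetCard k) (i ∈ ·) = k / #U := by
  simpa only [singleton_subset_iff, card_singleton, Nat.descFactorial_one] using
    uniformProb_powersetCard_subset (singleton_subset_iff.mpr hi) hkU

theorem negCorrelated_powersetCard (U : Finset α) (k : ℕ) :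
    NegCorrelated (U.powersetCard k) id := by
  intro I
  simp only [id]
  by_cases hzero : k ≤ #U ∧ I ⊆ U
  swap
  · refine (uniformProb_eq_zero fun X hX hIX => hzero ?_).trans_le
      (prod_nonneg fun _ _ => uniformProb_nonneg)
    have hX := mem_powersetCard.mp hX
    exact ⟨hX.2 ▸ card_le_card hX.1, hIX.trans hX.1⟩
  obtain ⟨hkU, hIU⟩ := hzero
  have hpow : (0 : ℝ) < (#U : ℝ) ^ #I := by
    exact_mod_cast (Nat.descFactorial_pos.mpr (card_le_card hIU)).trans_le
      (Nat.descFactorial_le_pow _ _)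
  have hdesc : (0 : ℝ) < (#U).descFactorial #I := by
    exact_mod_cast Nat.descFactorial_pos.mpr (card_le_card hIU)
  rw [prod_congr rfl fun i hi => uniformProb_powersetCard_mem (hIU hi) hkU, prod_const, div_pow,
    uniformProb_powersetCard_subset hIU hkU, div_le_div_iff₀ hdesc hpow,
    mul_comm _ ((#U).descFactorial #I : ℝ)]
  exact_mod_cast Nat.descFactorial_mul_pow_le hkU #I

end Slice

section SplitSlice

variable {α : Type*} [DecidableEq α] [Fintype α] {S Y Z : Finset α}

lemma union_inter_of_subset_of_subset_compl (hY : Y ⊆ S) (hZ : Z ⊆ Sᶜ) : (Y ∪ Z) ∩ S = Y := by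
  rw [union_inter_distrib_right, inter_eq_left.mpr hY,
    disjoint_iff_inter_eq_empty.mp (disjoint_of_subset_left hZ disjoint_compl_left), union_empty]

lemma union_inter_compl_of_subset_of_subset_compl (hY : Y ⊆ S) (hZ : Z ⊆ Sᶜ) :
    (Y ∪ Z) ∩ Sᶜ = Z := by
  rw [union_comm]
  exact union_inter_of_subset_of_subset_compl hZ (by rwa [compl_compl])

lemma injOn_union_powersetCard_product (S : Finset α) (a b : ℕ) :
    Set.InjOn (fun p : Finset α × Finset α => p.1 ∪ p.2)
      ↑(S.powersetCard a ×ˢ Sᶜ.powersetCard b) := by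
  refine Set.LeftInvOn.injOn (f₁' := fun X => (X ∩ S, X ∩ Sᶜ)) fun p hp => ?_
  simp only [coe_product, Set.mem_prod, mem_coe, mem_powersetCard] at hp
  exact Prod.ext (union_inter_of_subset_of_subset_compl hp.1.1 hp.2.1)
    (union_inter_compl_of_subset_of_subset_compl hp.1.1 hp.2.1)

lemma image_union_powersetCard_product (S : Finset α) (a b : ℕ) :
    (S.powersetCard a ×ˢ Sᶜ.powersetCard b).image (fun p => p.1 ∪ p.2) =
      univ.filter fun X => #(X ∩ S) = a ∧ #(X ∩ Sᶜ) = b := by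
  ext X
  simp only [mem_image, mem_product, mem_powersetCard, mem_filter, mem_univ, true_and, Prod.exists]
  constructor
  · rintro ⟨Y, Z, ⟨⟨hYS, rfl⟩, hZS, rfl⟩, rfl⟩
    rw [union_inter_of_subset_of_subset_compl hYS hZS,
      union_inter_compl_of_subset_of_subset_compl hYS hZS]
    exact ⟨rfl, rfl⟩
  · rintro ⟨rfl, rfl⟩
    refine ⟨X ∩ S, X ∩ Sᶜ, ⟨⟨inter_subset_right, rfl⟩, inter_subset_right, rfl⟩, ?_⟩
    rw [← inter_union_distrib_left, union_compl, inter_univ]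

theorem negCorrelated_filter_card_inter (S : Finset α) (a b : ℕ) :
    NegCorrelated (univ.filter fun X => #(X ∩ S) = a ∧ #(X ∩ Sᶜ) = b) id := by
  rw [← image_union_powersetCard_product]
  exact ((negCorrelated_powersetCard S a).union (negCorrelated_powersetCard Sᶜ b)).image
    (injOn_union_powersetCard_product S a b)

end SplitSlice

theorem stmt16_general {m : ℕ}
    (S T : Finset (Fin m)) :
    ∀ I : Finset (Fin m),
      ((((clauseFamily S ×ˢ clauseFamily T).filter
            fun p => I ⊆ p.1 ∪ p.2).card : ℝ)
          / (((clauseFamily S).card : ℝ) * ((clauseFamily T).card : ℝ)))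
        ≤ ∏ i ∈ I,
            ((((clauseFamily S ×ˢ clauseFamily T).filter
                  fun p => i ∈ p.1 ∪ p.2).card : ℝ)
              / (((clauseFamily S).card : ℝ) * ((clauseFamily T).card : ℝ))) := by
  intro I
  have h := ((negCorrelated_filter_card_inter S (m / 3) (m / 6)).union
    (negCorrelated_filter_card_inter T (m / 3) (m / 6))) I
  simpa only [clauseFamily, uniformProb, card_product, Nat.cast_mul, id] using h

/-- if `A` and `B` are drawn independently and uniformly from the clause
families of `S` and `T` respectively, where `|S| = |T| = m/2` and `|S ∩ T| = m/3`, then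
the indicators `X_i = 1[i ∈ A ∪ B]` are negatively correlated: for every `I ⊆ [m]`,
`Pr[I ⊆ A ∪ B] ≤ ∏_{i ∈ I} Pr[i ∈ A ∪ B]`. -/
theorem stmt16 {m : ℕ} (hm : 0 < m) (h6 : 6 ∣ m)
    (S T : Finset (Fin m)) (hS : S.card = m / 2) (hT : T.card = m / 2)
    (hST : (S ∩ T).card = m / 3) :
    ∀ I : Finset (Fin m),
      ((((clauseFamily S ×ˢ clauseFamily T).filter
            fun p => I ⊆ p.1 ∪ p.2).card : ℝ)
          / (((clauseFamily S).card : ℝ) * ((clauseFamily T).card : ℝ)))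
        ≤ ∏ i ∈ I,
            ((((clauseFamily S ×ˢ clauseFamily T).filter
                  fun p => i ∈ p.1 ∪ p.2).card : ℝ)
              / (((clauseFamily S).card : ℝ) * ((clauseFamily T).card : ℝ))) :=
  stmt16_general S T
end
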